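/- arXiv:2109.06303 — 4 statements merged into one kernel-verified Lean document; each statement's English description precedes it below -/
import Mathlib

section
/- Let n ≥ 1 be an integer and λ > 0 a real number. Then the set of positive integers d that are divisible by some prime power q = p^e with e ≥ 2 and q > λ·d^{1/n} has natural density 0. -/
open scoped Classical
open Filter Finset

lemma aux_exists_sq (p e d : ℕ) (hp : p.Prime) (he : 2 ≤ e) (hdvd : p ^ e ∣ d) :
    ∃ c : ℕ, 2 ≤ c ∧ c ^ 2 ∣ d ∧ p ^ e ≤ (c ^ 2) ^ 2 := by
  refine ⟨p ^ (e / 2), ?_, ?_, ?_⟩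
  · calc 2 ≤ p := hp.two_le
    _ = p ^ 1 := (pow_one p).symm
    _ ≤ p ^ (e / 2) := Nat.pow_le_pow_right hp.pos (by omega)
  · rw [← pow_mul]
    exact dvd_trans (pow_dvd_pow p (by omega : e / 2 * 2 ≤ e)) hdvd
  · rw [← pow_mul, ← pow_mul]
    exact Nat.pow_le_pow_right hp.pos (by omega)

lemma aux_count (m K : ℕ) :
    ((Finset.Icc 1 m).filter (fun d => ∃ c, K ≤ c ∧ c ^ 2 ∣ d)).card
      ≤ ∑ c ∈ Finset.Icc K m, m / c ^ 2 := by
  have hsub : (Finset.Icc 1 m).filter (fun d => ∃ c, K ≤ c ∧ c ^ 2 ∣ d)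
      ⊆ (Finset.Icc K m).biUnion (fun c => (Finset.Icc 1 m).filter (fun d => c ^ 2 ∣ d)) := by
    intro d hd
    simp only [mem_filter, mem_Icc] at hd
    obtain ⟨⟨hd1, hdm⟩, c, hKc, hcd⟩ := hd
    have hc2 : c ^ 2 ≤ d := Nat.le_of_dvd (by omega) hcd
    have hc : c ≤ c ^ 2 := Nat.le_self_pow (by norm_num) c
    simp only [mem_biUnion, mem_filter, mem_Icc]
    exact ⟨c, ⟨hKc, by omega⟩, ⟨by omega, hcd⟩⟩
  refine (Finset.card_le_card hsub).trans ((Finset.card_biUnion_le).trans ?_)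
  refine Finset.sum_le_sum fun c _ => ?_
  have h : Finset.Icc 1 m = Finset.Ioc 0 m := rfl
  rw [h]
  exact le_of_eq (Nat.Ioc_filter_dvd_card_eq_div m (c ^ 2))

lemma aux_inv_sq (m K : ℕ) (hK : 1 ≤ K) :
    ∑ c ∈ Finset.Icc K m, ((c : ℝ) ^ 2)⁻¹ ≤ 2 / K := by
  have hK' : (1 : ℝ) ≤ (K : ℝ) := by exact_mod_cast hK
  rcases le_or_gt K m with h | h
  · rw [Finset.Icc_eq_cons_Ioc h, Finset.sum_cons]
    have h1 := sum_Ioc_inv_sq_le_sub (α := ℝ) (k := K) (n := m) (by omega) h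
    have h2 : ((K : ℝ) ^ 2)⁻¹ ≤ (K : ℝ)⁻¹ := by
      apply inv_anti₀ (by linarith)
      nlinarith
    have h3 : (0:ℝ) ≤ (m : ℝ)⁻¹ := by positivity
    have h4 : 2 / (K : ℝ) = (K:ℝ)⁻¹ + (K:ℝ)⁻¹ := by ring
    rw [h4]
    linarith
  · rw [Finset.Icc_eq_empty (by omega), Finset.sum_empty]
    positivity

theorem density_zero_of_large_proper_prime_power_divisor
    (n : ℕ) (hn : 1 ≤ n) (lam : ℝ) (hlam : 0 < lam) :
    Filter.Tendsto (fun m : ℕ =>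
      (({d : ℕ | 0 < d ∧ ∃ p e : ℕ, p.Prime ∧ 2 ≤ e ∧ p ^ e ∣ d ∧
          lam * (d : ℝ) ^ ((1 : ℝ) / n) < (p ^ e : ℕ)}
        ∩ Set.Icc 1 m).ncard : ℝ) / m)
      Filter.atTop (nhds 0) := by
  set S : Set ℕ := {d : ℕ | 0 < d ∧ ∃ p e : ℕ, p.Prime ∧ 2 ≤ e ∧ p ^ e ∣ d ∧
          lam * (d : ℝ) ^ ((1 : ℝ) / n) < (p ^ e : ℕ)} with hS
  set Kf : ℕ → ℕ := fun m => ⌊(lam * (m : ℝ) ^ ((1:ℝ)/(2*n))) ^ ((1:ℝ)/4)⌋₊ + 1 with hKf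
  -- cardinality bound
  have card_bound : ∀ m : ℕ, (S ∩ Set.Icc 1 m).ncard ≤
      Nat.sqrt m + ∑ c ∈ Finset.Icc (Kf m) m, m / c ^ 2 := by
    intro m
    have hset : S ∩ Set.Icc 1 m = ↑((Finset.Icc 1 m).filter (fun d => d ∈ S)) := by
      ext d
      simp [Set.mem_inter_iff, and_comm]
    rw [hset, Set.ncard_coe_finset]
    have hsub : (Finset.Icc 1 m).filter (fun d => d ∈ S)
        ⊆ Finset.Icc 1 (Nat.sqrt m) ∪
          (Finset.Icc 1 m).filter (fun d => ∃ c, Kf m ≤ c ∧ c ^ 2 ∣ d) := by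
      intro d hd
      simp only [mem_filter, mem_Icc] at hd
      obtain ⟨⟨hd1, hdm⟩, hdS⟩ := hd
      rcases le_or_gt d (Nat.sqrt m) with hsm | hsm
      · exact Finset.mem_union_left _ (by simp [mem_Icc]; omega)
      · refine Finset.mem_union_right _ ?_
        simp only [mem_filter, mem_Icc]
        refine ⟨⟨hd1, hdm⟩, ?_⟩
        obtain ⟨-, p, e, hp, he, hdvd, hbig⟩ := hdS
        obtain ⟨c, hc2, hcd, hle⟩ := aux_exists_sq p e d hp he hdvd
        refine ⟨c, ?_, hcd⟩
        -- show Kf m ≤ c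
        have hd_sqrt : Real.sqrt m ≤ (d : ℝ) := by
          have h1 : m < (Nat.sqrt m + 1) ^ 2 := Nat.lt_succ_sqrt' m
          have h2 : Nat.sqrt m + 1 ≤ d := by omega
          have : (m : ℝ) ≤ (d : ℝ) ^ 2 := by
            have := h1.trans_le (Nat.pow_le_pow_left h2 2)
            exact_mod_cast this.le
          calc Real.sqrt m ≤ Real.sqrt ((d:ℝ)^2) := Real.sqrt_le_sqrt this
          _ = d := Real.sqrt_sq (by positivity)
        have hrw : (m : ℝ) ^ ((1:ℝ)/(2*n)) ≤ (d : ℝ) ^ ((1:ℝ)/n) := by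
          have h0 : (m : ℝ) ^ ((1:ℝ)/(2*n)) = (Real.sqrt m) ^ ((1:ℝ)/n) := by
            rw [Real.sqrt_eq_rpow, ← Real.rpow_mul (Nat.cast_nonneg m)]
            congr 1
            have hn0 : (n : ℝ) ≠ 0 := Nat.cast_ne_zero.mpr (by omega)
            field_simp
          rw [h0]
          exact Real.rpow_le_rpow (Real.sqrt_nonneg _) hd_sqrt (by positivity)
        have hX : lam * (m : ℝ) ^ ((1:ℝ)/(2*n)) < (c : ℝ) ^ (4 : ℕ) := by
          have h1 : lam * (m : ℝ) ^ ((1:ℝ)/(2*n)) ≤ lam * (d : ℝ) ^ ((1:ℝ)/n) := by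
            exact mul_le_mul_of_nonneg_left hrw hlam.le
          have h2 : ((p ^ e : ℕ) : ℝ) ≤ ((c ^ 2) ^ 2 : ℕ) := by exact_mod_cast hle
          have h3 : (((c ^ 2) ^ 2 : ℕ) : ℝ) = (c : ℝ) ^ (4 : ℕ) := by push_cast; ring
          linarith [hbig.trans_le (h2.trans_eq h3)]
        have hc4 : (lam * (m : ℝ) ^ ((1:ℝ)/(2*n))) ^ ((1:ℝ)/4) < (c : ℝ) := by
          have h0 : (0:ℝ) ≤ lam * (m : ℝ) ^ ((1:ℝ)/(2*n)) := by positivity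
          have h5 := Real.rpow_lt_rpow h0 hX (by norm_num : (0:ℝ) < (1:ℝ)/4)
          have hcc : ((c : ℝ) ^ (4 : ℕ)) ^ ((1:ℝ)/4) = (c : ℝ) := by
            rw [← Real.rpow_natCast (c : ℝ) 4, ← Real.rpow_mul (Nat.cast_nonneg c)]
            norm_num
          rwa [hcc] at h5
        have : ⌊(lam * (m : ℝ) ^ ((1:ℝ)/(2*n))) ^ ((1:ℝ)/4)⌋₊ < c :=
          Nat.floor_lt (by positivity) |>.mpr hc4
        simp only [hKf]
        omega
    calc ((Finset.Icc 1 m).filter (fun d => d ∈ S)).card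
        ≤ (Finset.Icc 1 (Nat.sqrt m) ∪
          (Finset.Icc 1 m).filter (fun d => ∃ c, Kf m ≤ c ∧ c ^ 2 ∣ d)).card :=
          Finset.card_le_card hsub
      _ ≤ (Finset.Icc 1 (Nat.sqrt m)).card +
          ((Finset.Icc 1 m).filter (fun d => ∃ c, Kf m ≤ c ∧ c ^ 2 ∣ d)).card :=
          Finset.card_union_le _ _
      _ ≤ Nat.sqrt m + ∑ c ∈ Finset.Icc (Kf m) m, m / c ^ 2 := by
          gcongr
          · simp
          · exact aux_count m (Kf m)
  -- real bound
  have ratio_bound : ∀ m : ℕ, 1 ≤ m →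
      ((S ∩ Set.Icc 1 m).ncard : ℝ) / m ≤ (Nat.sqrt m : ℝ) / m + 2 / (Kf m) := by
    intro m hm
    have hm0 : (0:ℝ) < m := by exact_mod_cast hm
    have hK1 : 1 ≤ Kf m := by simp [hKf]
    have hK0 : (0:ℝ) < (Kf m : ℝ) := by exact_mod_cast hK1
    have h1 : ((S ∩ Set.Icc 1 m).ncard : ℝ) ≤ (Nat.sqrt m : ℝ) + (m : ℝ) * (2 / Kf m) := by
      have hc := card_bound m
      have hsum : ((∑ c ∈ Finset.Icc (Kf m) m, m / c ^ 2 : ℕ) : ℝ)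
          ≤ (m : ℝ) * (2 / Kf m) := by
        rw [Nat.cast_sum]
        calc (∑ c ∈ Finset.Icc (Kf m) m, ((m / c ^ 2 : ℕ) : ℝ))
            ≤ ∑ c ∈ Finset.Icc (Kf m) m, (m : ℝ) * ((c:ℝ) ^ 2)⁻¹ := by
              refine Finset.sum_le_sum fun c hc => ?_
              calc ((m / c ^ 2 : ℕ) : ℝ) ≤ (m : ℝ) / ((c ^ 2 : ℕ) : ℝ) := Nat.cast_div_le
                _ = (m : ℝ) * ((c:ℝ) ^ 2)⁻¹ := by push_cast; ring
          _ = (m : ℝ) * ∑ c ∈ Finset.Icc (Kf m) m, ((c:ℝ) ^ 2)⁻¹ := by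
              rw [Finset.mul_sum]
          _ ≤ (m : ℝ) * (2 / Kf m) := by
              exact mul_le_mul_of_nonneg_left (aux_inv_sq m (Kf m) hK1) hm0.le
      have hcast : ((S ∩ Set.Icc 1 m).ncard : ℝ) ≤
          (Nat.sqrt m : ℝ) + ((∑ c ∈ Finset.Icc (Kf m) m, m / c ^ 2 : ℕ) : ℝ) := by
        exact_mod_cast hc
      linarith
    calc ((S ∩ Set.Icc 1 m).ncard : ℝ) / m
        ≤ ((Nat.sqrt m : ℝ) + (m : ℝ) * (2 / Kf m)) / m := by
          gcongr
      _ = (Nat.sqrt m : ℝ) / m + 2 / (Kf m) := by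
          field_simp
  -- the bound tends to zero
  have hKtop : Tendsto (fun m : ℕ => (Kf m : ℝ)) atTop atTop := by
    apply tendsto_natCast_atTop_atTop.comp
    have hf : Tendsto (fun m : ℕ => (lam * (m : ℝ) ^ ((1:ℝ)/(2*n))) ^ ((1:ℝ)/4)) atTop atTop := by
      apply (tendsto_rpow_atTop (by norm_num : (0:ℝ) < (1:ℝ)/4)).comp
      apply Tendsto.const_mul_atTop hlam
      apply (tendsto_rpow_atTop ?_).comp tendsto_natCast_atTop_atTop
      have : (0:ℝ) < (n:ℝ) := by exact_mod_cast hn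
      positivity
    have h1 : Tendsto (fun m : ℕ => ⌊(lam * (m : ℝ) ^ ((1:ℝ)/(2*n))) ^ ((1:ℝ)/4)⌋₊) atTop atTop :=
      (tendsto_nat_floor_atTop (α := ℝ)).comp hf
    exact tendsto_atTop_mono (fun m => Nat.le_succ _) h1
  have hterm2 : Tendsto (fun m : ℕ => 2 / (Kf m : ℝ)) atTop (nhds 0) :=
    Tendsto.div_atTop tendsto_const_nhds hKtop
  have hterm1 : Tendsto (fun m : ℕ => (Nat.sqrt m : ℝ) / m) atTop (nhds 0) := by
    have hup : Tendsto (fun m : ℕ => (Real.sqrt m)⁻¹) atTop (nhds 0) := by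
      apply Tendsto.inv_tendsto_atTop
      have h := (tendsto_rpow_atTop (by norm_num : (0:ℝ) < 1/2)).comp
        (tendsto_natCast_atTop_atTop (R := ℝ))
      exact h.congr fun m => (Real.sqrt_eq_rpow _).symm
    apply tendsto_of_tendsto_of_tendsto_of_le_of_le' tendsto_const_nhds hup
    · filter_upwards with m
      positivity
    · filter_upwards [eventually_ge_atTop 1] with m hm
      have hm0 : (0:ℝ) < m := by exact_mod_cast hm
      have h1 : (Nat.sqrt m : ℝ) ≤ Real.sqrt m := by
        rw [show (m:ℝ) = ((m:ℕ):ℝ) from rfl]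
        exact Real.nat_sqrt_le_real_sqrt
      have h2 : (0:ℝ) < Real.sqrt m := Real.sqrt_pos.mpr hm0
      rw [div_le_iff₀ hm0, inv_mul_eq_div, le_div_iff₀ h2]
      calc (Nat.sqrt m : ℝ) * Real.sqrt m ≤ Real.sqrt m * Real.sqrt m := by
            exact mul_le_mul_of_nonneg_right h1 h2.le
        _ = m := Real.mul_self_sqrt hm0.le
  have hB : Tendsto (fun m : ℕ => (Nat.sqrt m : ℝ) / m + 2 / (Kf m : ℝ)) atTop (nhds 0) := by
    simpa using hterm1.add hterm2
  apply tendsto_of_tendsto_of_tendsto_of_le_of_le' tendsto_const_nhds hB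
  · filter_upwards with m
    positivity
  · filter_upwards [eventually_ge_atTop 1] with m hm
    exact ratio_bound m hm
end

section
/- Let n ≥ 3 be an integer and write C = binomial(n,2) = n(n−1)/2. Let q be a prime power coprime to n!, and let d be a positive integer divisible by q satisfying (C−1)·q^n + (n!−C)·q^{n−1} + (2^n+1)·n! ≤ d. Then there exist integers i, j, k with 0 ≤ i ≤ C−1, 0 ≤ j ≤ n!−C, C dividing j, k ≥ 2^n+1, q dividing k, and d = i·q^n + j·q^{n−1} + k·n!. -/
/-!
Put `Q = q ^ (n - 1)`, so `q ^ n = q * Q`. As `n!` is invertible modulo `Q`, some `k₀` in the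
window `[2 ^ n + 1, 2 ^ n + Q]` has `k₀ * n! ≡ d [MOD Q]`; then `d = D * Q + k₀ * n!`, and `q ∣ k₀`
because `q` divides `d` and `Q`. The lower bound on `d` gives `D ≥ (q - 1) * (C - 1)`, so by the
Sylvester–Frobenius bound (`q` is coprime to `C ∣ n!`) `D = i * q + C * m` with `i < C`.
Reducing `C * m` modulo `n!` leaves a multiple `j` of `C` below `n!`, hence `j ≤ n! - C`, and the
quotient is absorbed into `k = k₀ + (C * m / n!) * Q`.
-/

namespace Nat

theorem exists_mem_Ico_mul_modEq {a n : ℕ} [NeZero n] (h : a.Coprime n) (b s : ℕ) :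
    ∃ k, s ≤ k ∧ k < s + n ∧ k * a ≡ b [MOD n] := by
  set r : ZMod n := b * (a : ZMod n)⁻¹ - s
  refine ⟨s + r.val, le_add_right s _, Nat.add_lt_add_left r.val_lt s, ?_⟩
  rw [← ZMod.natCast_eq_natCast_iff, cast_mul, cast_add, ZMod.natCast_zmod_val, add_sub_cancel,
    mul_assoc, mul_comm _ (a : ZMod n), ZMod.coe_mul_inv_eq_one a h, mul_one]

theorem exists_eq_mul_add_mul_of_coprime {F Q s e d : ℕ} [NeZero Q] (hFQ : F.Coprime Q)
    (hF : 0 < F) (hd : e * Q + (s + Q) * F ≤ d) :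
    ∃ D k, e < D ∧ s ≤ k ∧ k < s + Q ∧ d = D * Q + k * F := by
  obtain ⟨k, hsk, hkQ, hk⟩ := exists_mem_Ico_mul_modEq hFQ d s
  have hkF : k * F + F ≤ (s + Q) * F := by nlinarith
  obtain ⟨D, hD⟩ := (modEq_iff_dvd' (by nlinarith)).mp hk
  have hdD : d = D * Q + k * F := by rw [mul_comm D]; omega
  exact ⟨D, k, Nat.lt_of_mul_lt_mul_right (a := Q) (by omega), hsk, hkQ, hdD⟩

theorem exists_eq_mul_add_mul_of_mul_pred_le {a b D : ℕ} (hab : a.Coprime b) (hb : 0 < b)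
    (hD : (a - 1) * (b - 1) ≤ D) : ∃ i < b, ∃ m, D = i * a + b * m := by
  obtain ⟨x, y, rfl⟩ :=
    exists_add_mul_eq_of_gcd_dvd_of_mul_pred_le a b D (by simp [hab.gcd_eq_one]) hD
  refine ⟨x % b, mod_lt x hb, y + x / b * a, ?_⟩
  nth_rw 1 [← mod_add_div x b]
  ring

theorem add_le_of_dvd_of_lt {a b c : ℕ} (ha : c ∣ a) (hb : c ∣ b) (h : a < b) : a + c ≤ b := by
  have := le_of_dvd (Nat.sub_pos_of_lt h) (Nat.dvd_sub hb ha)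
  omega

end Nat

theorem decomposition_with_binomial_general
    (n : ℕ) (hn : 3 ≤ n) (C : ℕ) (hC : C = n.choose 2)
    (q : ℕ) (hq : IsPrimePow q) (hqcop : Nat.Coprime q (Nat.factorial n))
    (d : ℕ) (hqd : q ∣ d)
    (hle : (C - 1) * q ^ n + (Nat.factorial n - C) * q ^ (n - 1)
      + (2 ^ n + 1) * Nat.factorial n ≤ d) :
    ∃ i j k : ℕ, i ≤ C - 1 ∧ j ≤ Nat.factorial n - C ∧ C ∣ j ∧ 2 ^ n + 1 ≤ k ∧ q ∣ k ∧
      d = i * q ^ n + j * q ^ (n - 1) + k * Nat.factorial n := by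
  set F := n.factorial
  set Q := q ^ (n - 1)
  have hq2 : 2 ≤ q := hq.two_le
  have hC2 : 2 ≤ C := hC ▸ le_trans (by decide) (Nat.choose_le_choose 2 hn)
  have hCF : C ∣ F :=
    ⟨Nat.factorial 2 * (n - 2).factorial,
      by rw [hC, ← mul_assoc, Nat.choose_mul_factorial_mul_factorial (by omega)]⟩
  have hF : 0 < F := n.factorial_pos
  have hP : q ^ n = q * Q := by rw [← pow_succ']; congr; omega
  have hqQ : q ∣ Q := dvd_pow_self q (by omega)
  have : NeZero Q := ⟨pow_ne_zero _ (by omega)⟩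
  have hCq : C ≤ (C - 1) * q := by nlinarith [Nat.sub_add_cancel (by omega : 1 ≤ C)]
  have hbound : ((C - 1) * q - C) * Q + (2 ^ n + 1 + Q) * F ≤ d := by
    have hCleF : C ≤ F := Nat.le_of_dvd hF hCF
    convert hle using 1
    rw [hP]
    zify [hCq, hCleF, (by omega : 1 ≤ C)]
    ring
  obtain ⟨D, k, heD, hsk, -, rfl⟩ :=
    Nat.exists_eq_mul_add_mul_of_coprime (hqcop.pow_left (n - 1)).symm hF hbound
  have hqk : q ∣ k := hqcop.dvd_of_dvd_mul_right ((Nat.dvd_add_right (hqQ.mul_left D)).mp hqd)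
  obtain ⟨i, hi, m, rfl⟩ := Nat.exists_eq_mul_add_mul_of_mul_pred_le (D := D)
    (hqcop.coprime_dvd_right hCF) (by omega) (by rw [Nat.sub_one_mul, mul_comm]; omega)
  have hCj : C ∣ C * m % F := (Nat.dvd_mod_iff hCF).mpr (dvd_mul_right C m)
  have hjF := Nat.add_le_of_dvd_of_lt hCj hCF (Nat.mod_lt _ hF)
  refine ⟨i, C * m % F, k + C * m / F * Q, by omega, by omega, hCj, by omega,
    dvd_add hqk (dvd_mul_of_dvd_right hqQ _), ?_⟩
  rw [hP]
  nth_rw 1 [← Nat.mod_add_div (C * m) F]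
  ring

theorem decomposition_with_binomial
    (n : ℕ) (hn : 3 ≤ n) (C : ℕ) (hC : C = n.choose 2)
    (q : ℕ) (hq : IsPrimePow q) (hqcop : Nat.Coprime q (Nat.factorial n))
    (d : ℕ) (hd : 0 < d) (hqd : q ∣ d)
    (hle : (C - 1) * q ^ n + (Nat.factorial n - C) * q ^ (n - 1)
      + (2 ^ n + 1) * Nat.factorial n ≤ d) :
    ∃ i j k : ℕ, i ≤ C - 1 ∧ j ≤ Nat.factorial n - C ∧ C ∣ j ∧ 2 ^ n + 1 ≤ k ∧ q ∣ k ∧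
      d = i * q ^ n + j * q ^ (n - 1) + k * Nat.factorial n :=
  decomposition_with_binomial_general n hn C hC q hq hqcop d hqd hle
end

section
/- Let n ≥ 3 be an integer. Let q be a prime power coprime to n!, and let d be a positive integer divisible by q satisfying (n!−1)·q^n + (2^n+1)·n! ≤ d. Then there exist integers i, k with 0 ≤ i ≤ n!−1, k ≥ 2^n+1, q dividing k, and d = i·q^n + k·n!. -/
theorem decomposition_without_binomial
    (n : ℕ) (hn : 3 ≤ n)
    (q : ℕ) (hq : IsPrimePow q) (hqcop : Nat.Coprime q (Nat.factorial n))
    (d : ℕ) (hd : 0 < d) (hqd : q ∣ d)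
    (hle : (Nat.factorial n - 1) * q ^ n + (2 ^ n + 1) * Nat.factorial n ≤ d) :
    ∃ i k : ℕ, i ≤ Nat.factorial n - 1 ∧ 2 ^ n + 1 ≤ k ∧ q ∣ k ∧
      d = i * q ^ n + k * Nat.factorial n := by
  set N := Nat.factorial n with hN
  have hN6 : 6 ≤ N := by
    calc 6 = Nat.factorial 3 := rfl
    _ ≤ N := Nat.factorial_le hn
  have hNpos : 0 < N := by omega
  haveI : NeZero N := ⟨by omega⟩
  have hcop : Nat.Coprime (q ^ n) N := (Nat.Coprime.pow_left n hqcop)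
  set u : ZMod N := ((q ^ n : ℕ) : ZMod N) with hu
  have huinv : u * u⁻¹ = 1 := by
    rw [hu]
    exact ZMod.coe_mul_inv_eq_one _ hcop
  set i : ℕ := ((d : ZMod N) * u⁻¹).val with hi
  have hilt : i < N := ZMod.val_lt _
  have hicast : (i : ZMod N) = (d : ZMod N) * u⁻¹ := by
    rw [hi, ZMod.natCast_val, ZMod.cast_id]
  have hmod : (i * q ^ n : ℕ) ≡ d [MOD N] := by
    rw [← ZMod.natCast_eq_natCast_iff]
    push_cast
    rw [hicast, mul_assoc, show ((q : ZMod N)) ^ n = u by rw [hu]; push_cast; ring,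
      mul_comm u⁻¹ u, huinv, mul_one]
  have hile : i * q ^ n ≤ (N - 1) * q ^ n :=
    Nat.mul_le_mul_right _ (by omega)
  have hiqd : i * q ^ n + (2 ^ n + 1) * N ≤ d := le_trans (by omega) hle
  have hdvd : N ∣ d - i * q ^ n := (Nat.modEq_iff_dvd' (by omega)).mp hmod
  obtain ⟨k, hk⟩ := hdvd
  rw [Nat.mul_comm N k] at hk
  have hdk : d = i * q ^ n + k * N := by omega
  refine ⟨i, k, by omega, ?_, ?_, hdk⟩
  · by_contra h
    push_neg at h
    have : k * N + N ≤ (2 ^ n + 1) * N := by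
      calc k * N + N = (k + 1) * N := by ring
      _ ≤ (2 ^ n + 1) * N := Nat.mul_le_mul_right _ (by omega)
    omega
  · have hq1 : q ∣ i * q ^ n := (dvd_pow_self q (by omega : n ≠ 0)).mul_left i
    have hqd' : q ∣ k * N := by
      rw [← hk]
      exact Nat.dvd_sub hqd hq1
    exact Nat.Coprime.dvd_of_dvd_mul_right hqcop hqd'
end

section
/- Let n ≥ 1 be an integer and let A be a set of positive integers such that for every prime number p > n, the set of elements of A divisible by p is finite. Then A has natural density 0. -/
/-!
Choose primes p₁, …, p_k > n with ∏ (1 - 1/pᵢ) < ε, which is possible because ∑ 1/p diverges,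
and put N = ∏ pᵢ. All but finitely many elements of A are coprime to N, and at most
φ(N) (m/N + 1) integers in [1, m] are coprime to N. Since φ(N)/N = ∏ (1 - 1/pᵢ), the upper
density of A is below ε.
-/

open Filter

theorem Real.prod_one_sub_le_exp_neg_sum {ι : Type*} (s : Finset ι) {x : ι → ℝ}
    (hx : ∀ i ∈ s, x i ≤ 1) : ∏ i ∈ s, (1 - x i) ≤ Real.exp (-∑ i ∈ s, x i) :=
  calc ∏ i ∈ s, (1 - x i)
      ≤ ∏ i ∈ s, Real.exp (-x i) :=
        Finset.prod_le_prod (fun i hi => sub_nonneg.2 (hx i hi)) fun i _ => Real.one_sub_le_exp_neg _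
    _ = Real.exp (-∑ i ∈ s, x i) := by rw [← Real.exp_sum, Finset.sum_neg_distrib]

theorem not_summable_inv_on_primes_gt (n : ℕ) :
    ¬ Summable ({p : ℕ | p.Prime ∧ n < p}.indicator fun k : ℕ => (k : ℝ)⁻¹) := by
  have hcofinite : {p : ℕ | p.Prime ∧ n < p}.indicator (fun k : ℕ => (k : ℝ)⁻¹)
      =ᶠ[cofinite] {p : ℕ | p.Prime}.indicator fun k : ℕ => 1 / (k : ℝ) := by
    rw [Nat.cofinite_eq_atTop]
    filter_upwards [eventually_gt_atTop n] with k hk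
    simp [Set.indicator_apply, hk]
  rw [summable_congr_cofinite hcofinite]
  exact not_summable_one_div_on_primes

theorem exists_finset_primes_gt_prod_one_sub_inv_lt (n : ℕ) {ε : ℝ} (hε : 0 < ε) :
    ∃ S : Finset ℕ, (∀ p ∈ S, p.Prime ∧ n < p) ∧ ∏ p ∈ S, (1 - (p : ℝ)⁻¹) < ε := by
  have hdiverges := (not_summable_iff_tendsto_nat_atTop_of_nonneg
    (Set.indicator_nonneg fun k _ => by positivity)).mp (not_summable_inv_on_primes_gt n)
  obtain ⟨m, hm⟩ := (hdiverges.eventually_gt_atTop (-Real.log ε)).exists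
  set S := (Finset.range m).filter (fun p => p.Prime ∧ n < p)
  refine ⟨S, fun p hp => (Finset.mem_filter.1 hp).2, ?_⟩
  calc ∏ p ∈ S, (1 - (p : ℝ)⁻¹)
      ≤ Real.exp (-∑ p ∈ S, (p : ℝ)⁻¹) :=
        Real.prod_one_sub_le_exp_neg_sum S fun p _ => Nat.cast_inv_le_one p
    _ < ε := by
        rw [← Real.lt_log_iff_exp_lt hε, Finset.sum_filter]
        simpa only [Set.indicator_apply, Set.mem_ofPred_eq, neg_lt] using hm

theorem Nat.totient_div_self_eq_prod_primeFactors {n : ℕ} (hn : n ≠ 0) :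
    (n.totient : ℝ) / n = ∏ p ∈ n.primeFactors, (1 - (p : ℝ)⁻¹) := by
  have h := congrArg ((↑) : ℚ → ℝ) (Nat.totient_eq_mul_prod_factors n)
  push_cast at h
  rw [h, mul_div_cancel_left₀ _ (Nat.cast_ne_zero.2 hn)]

theorem ncard_inter_Icc_le_ncard_not_coprime_add {A : Set ℕ} {N : ℕ} (hN : N ≠ 0)
    (hfin : {a ∈ A | ¬ N.Coprime a}.Finite) (m : ℕ) :
    (A ∩ Set.Icc 1 m).ncard ≤ {a ∈ A | ¬ N.Coprime a}.ncard + N.totient * (m / N + 1) := by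
  have hsub : A ∩ Set.Icc 1 m ⊆
      {a ∈ A | ¬ N.Coprime a} ∪ ↑((Finset.Ico 1 (1 + m)).filter (N.Coprime ·)) := by
    rintro a ⟨haA, ha1, ham⟩
    by_cases hcop : N.Coprime a
    · exact Or.inr (Finset.mem_filter.2 ⟨Finset.mem_Ico.2 ⟨ha1, by omega⟩, hcop⟩)
    · exact Or.inl ⟨haA, hcop⟩
  calc (A ∩ Set.Icc 1 m).ncard
      ≤ {a ∈ A | ¬ N.Coprime a}.ncard + ((Finset.Ico 1 (1 + m)).filter (N.Coprime ·)).card := by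
        grw [Set.ncard_le_ncard hsub (hfin.union (Finset.finite_toSet _)), Set.ncard_union_le,
          Set.ncard_coe_finset]
    _ ≤ _ := by grw [Nat.Ico_filter_coprime_le 1 m hN]

theorem eventually_ncard_inter_Icc_div_lt {A : Set ℕ} {N : ℕ} (hN : N ≠ 0)
    (hfin : {a ∈ A | ¬ N.Coprime a}.Finite) {ε : ℝ} (hε : (N.totient : ℝ) / N < ε) :
    ∀ᶠ m : ℕ in atTop, ((A ∩ Set.Icc 1 m).ncard : ℝ) / m < ε := by
  set C := {a ∈ A | ¬ N.Coprime a}.ncard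
  have hbound : Tendsto (fun m : ℕ => ((C : ℝ) + N.totient) / m + (N.totient : ℝ) / N)
      atTop (nhds ((N.totient : ℝ) / N)) := by
    simpa using (tendsto_const_div_atTop_nhds_zero_nat ((C : ℝ) + N.totient)).add_const
      ((N.totient : ℝ) / N)
  filter_upwards [hbound.eventually_lt_const hε, eventually_gt_atTop 0] with m hm hm0
  refine lt_of_le_of_lt ?_ hm
  calc ((A ∩ Set.Icc 1 m).ncard : ℝ) / m
      ≤ ((C : ℝ) + N.totient * ((m / N : ℕ) + 1)) / m := by
        gcongr
        exact_mod_cast ncard_inter_Icc_le_ncard_not_coprime_add hN hfin m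
    _ ≤ ((C : ℝ) + N.totient * ((m : ℝ) / N + 1)) / m := by
        gcongr
        exact Nat.cast_div_le
    _ = ((C : ℝ) + N.totient) / m + (N.totient : ℝ) / N := by
        field_simp
        ring

theorem density_zero_of_finite_multiples_of_large_primes_general
    (n : ℕ) (A : Set ℕ)
    (hfin : ∀ p : ℕ, p.Prime → n < p → {a ∈ A | p ∣ a}.Finite) :
    Filter.Tendsto (fun m : ℕ => ((A ∩ Set.Icc 1 m).ncard : ℝ) / m)
      Filter.atTop (nhds 0) := by
  refine tendsto_order.2 ⟨fun δ hδ => .of_forall fun m => hδ.trans_le (by positivity),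
    fun ε hε => ?_⟩
  obtain ⟨S, hS, hprod⟩ := exists_finset_primes_gt_prod_one_sub_inv_lt n hε
  set N := ∏ p ∈ S, p
  have hN : N ≠ 0 := Finset.prod_ne_zero_iff.2 fun p hp => (hS p hp).1.ne_zero
  have hdensity : (N.totient : ℝ) / N < ε := by
    rwa [Nat.totient_div_self_eq_prod_primeFactors hN,
      Nat.primeFactors_prod fun p hp => (hS p hp).1]
  have hnot_coprime : {a ∈ A | ¬ N.Coprime a} ⊆ ⋃ p ∈ S, {a ∈ A | p ∣ a} := by
    rintro a ⟨haA, hcop⟩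
    by_contra hnot
    refine hcop (Nat.Coprime.prod_left fun p hp => (hS p hp).1.coprime_iff_not_dvd.2 fun hpa => ?_)
    exact hnot (Set.mem_biUnion hp ⟨haA, hpa⟩)
  exact eventually_ncard_inter_Icc_div_lt hN
    ((S.finite_toSet.biUnion fun p hp => hfin p (hS p hp).1 (hS p hp).2).subset hnot_coprime)
    hdensity

theorem density_zero_of_finite_multiples_of_large_primes
    (n : ℕ) (hn : 1 ≤ n) (A : Set ℕ) (hA : ∀ a ∈ A, 0 < a)
    (hfin : ∀ p : ℕ, p.Prime → n < p → {a ∈ A | p ∣ a}.Finite) :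
    Filter.Tendsto (fun m : ℕ => ((A ∩ Set.Icc 1 m).ncard : ℝ) / m)
      Filter.atTop (nhds 0) :=
  density_zero_of_finite_multiples_of_large_primes_general n A hfin
end
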